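/- Let G be the group of order-preserving bijections of ℝ under composition, and let N be the normal subgroup of G consisting of those f such that f(x) = x for all sufficiently large x. Then the quotient group G/N is left-orderable: there exists a linear order < on G/N such that for all x, y, z in G/N, x < y implies z·x < z·y. -/

import Mathlib

open Filter

namespace Stmt10Aux

/-- An ultrafilter on `ℝ` finer than `atTop`. -/
noncomputable def UU : Ultrafilter ℝ := Ultrafilter.of atTop

lemma UU_le : (UU : Filter ℝ) ≤ atTop := Ultrafilter.of_le _

/-- The ultrapower of `ℝ` along `UU` (a linear order). -/
abbrev LL : Type := Filter.Germ (UU : Filter ℝ) ℝ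

/-- The "infinitely large" elements of the ultrapower. -/
abbrev SS : Type := {β : LL // ∀ r : ℝ, ((r : ℝ) : LL) ≤ β}

lemma map_mono (f : ℝ ≃o ℝ) : Monotone (Germ.map (⇑f) : LL → LL) := by
  intro β γ h
  induction β using Germ.inductionOn with | _ u =>
  induction γ using Germ.inductionOn with | _ v =>
  rw [Germ.coe_le] at h
  rw [Germ.map_coe, Germ.map_coe, Germ.coe_le]
  exact h.mono fun i hi => f.monotone hi

lemma map_inj (f : ℝ ≃o ℝ) : Function.Injective (Germ.map (⇑f) : LL → LL) := by
  intro β γ h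
  have h2 := congrArg (Germ.map (⇑f.symm)) h
  rwa [Germ.map_map, Germ.map_map,
    (by funext x; simp : (⇑f.symm ∘ ⇑f) = id), Germ.map_id, id_eq, id_eq] at h2

/-- Action of an order isomorphism on the infinite elements. -/
noncomputable def actG (f : ℝ ≃o ℝ) (β : SS) : SS :=
  ⟨Germ.map (⇑f) β.1, by
    intro r
    have h1 : ((f.symm r : ℝ) : LL) ≤ β.1 := β.2 _
    have h2 := map_mono f h1
    rwa [Germ.map_const, f.apply_symm_apply] at h2⟩

lemma actG_mul (f g : ℝ ≃o ℝ) (β : SS) : actG (f * g) β = actG f (actG g β) := by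
  apply Subtype.ext
  show Germ.map (⇑(f * g)) β.1 = Germ.map (⇑f) (Germ.map (⇑g) β.1)
  rw [Germ.map_map]
  rfl

lemma actG_strictMono (f : ℝ ≃o ℝ) : StrictMono (actG f) := by
  have hm : Monotone (actG f) := fun β γ h => by
    change Germ.map (⇑f) β.1 ≤ Germ.map (⇑f) γ.1
    exact map_mono f h
  have hi : Function.Injective (actG f) := fun β γ h =>
    Subtype.ext (map_inj f (congrArg Subtype.val h))
  exact hm.strictMono_of_injective hi

variable (N : Subgroup (ℝ ≃o ℝ)) [N.Normal]
variable (hN : (N : Set (ℝ ≃o ℝ)) = {f : ℝ ≃o ℝ | ∃ n : ℝ, ∀ x : ℝ, n ≤ x → f x = x})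

/-- The action descends to the quotient by germs-at-`+∞`. -/
noncomputable def act : (ℝ ≃o ℝ) ⧸ N → SS → SS := fun q =>
  Quotient.liftOn' q actG (by
    intro f g hfg
    have hmem : f⁻¹ * g ∈ N := (QuotientGroup.leftRel_apply).mp hfg
    have hmem' : (f⁻¹ * g) ∈ {h : ℝ ≃o ℝ | ∃ n : ℝ, ∀ x : ℝ, n ≤ x → h x = x} := by
      rw [← hN]; exact hmem
    obtain ⟨n, hn⟩ := hmem'
    have key : ∀ x : ℝ, n ≤ x → f x = g x := by
      intro x hx
      have h1 : f⁻¹ (g x) = x := hn x hx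
      have h2 : f (f⁻¹ (g x)) = f x := congrArg f h1
      simpa using h2.symm
    have main : ∀ b : LL, ((n : ℝ) : LL) ≤ b → Germ.map (⇑f) b = Germ.map (⇑g) b := by
      intro b
      induction b using Germ.inductionOn with | _ u =>
      intro hb
      rw [show ((n : ℝ) : LL) = (↑(fun _ : ℝ => n) : LL) from rfl, Germ.coe_le] at hb
      rw [Germ.map_coe, Germ.map_coe, Germ.coe_eq]
      exact hb.mono fun i hi => key (u i) hi
    funext β
    exact Subtype.ext (main β.1 (β.2 n)))

lemma act_mk (f : ℝ ≃o ℝ) : act N hN (QuotientGroup.mk f) = actG f := rfl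

lemma act_mul (x y : (ℝ ≃o ℝ) ⧸ N) (β : SS) :
    act N hN (x * y) β = act N hN x (act N hN y β) := by
  induction x, y using Quotient.inductionOn₂' with | _ f g =>
  show act N hN ((QuotientGroup.mk f : (ℝ ≃o ℝ) ⧸ N) * (QuotientGroup.mk g : (ℝ ≃o ℝ) ⧸ N)) β
      = act N hN (QuotientGroup.mk f) (act N hN (QuotientGroup.mk g) β)
  rw [← QuotientGroup.mk_mul, act_mk, act_mk, act_mk, actG_mul]

lemma act_faithful (x y : (ℝ ≃o ℝ) ⧸ N) (hxy : x ≠ y) :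
    ∃ β : SS, act N hN x β ≠ act N hN y β := by
  induction x, y using Quotient.inductionOn₂' with | _ f g =>
  have hne : ¬ (f⁻¹ * g ∈ N) := by
    intro hmem
    exact hxy (Quotient.eq''.mpr ((QuotientGroup.leftRel_apply).mpr hmem))
  have hne' : ¬ ∃ n : ℝ, ∀ x : ℝ, n ≤ x → (f⁻¹ * g) x = x := by
    intro h
    apply hne
    rw [← SetLike.mem_coe, hN]
    exact h
  push_neg at hne'
  -- hne' : ∀ n, ∃ x, n ≤ x ∧ (f⁻¹ * g) x ≠ x
  choose u hu1 hu2 using hne'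
  have hinf : ∀ r : ℝ, ((r : ℝ) : LL) ≤ (↑u : LL) := by
    intro r
    rw [show ((r : ℝ) : LL) = (↑(fun _ : ℝ => r) : LL) from rfl, Germ.coe_le]
    have h : ∀ᶠ i in (atTop : Filter ℝ), r ≤ u i :=
      eventually_atTop.2 ⟨r, fun i hi => hi.trans (hu1 i)⟩
    exact h.filter_mono UU_le
  refine ⟨⟨(↑u : LL), hinf⟩, ?_⟩
  show actG f ⟨(↑u : LL), hinf⟩ ≠ actG g ⟨(↑u : LL), hinf⟩
  intro h
  have h1 : Germ.map (⇑f) (↑u : LL) = Germ.map (⇑g) (↑u : LL) := congrArg Subtype.val h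
  rw [Germ.map_coe, Germ.map_coe, Germ.coe_eq] at h1
  obtain ⟨i, hi⟩ := h1.exists
  apply hu2 i
  show f⁻¹ (g (u i)) = u i
  have : f⁻¹ (g (u i)) = f⁻¹ (f (u i)) := congrArg _ hi.symm
  simpa using this

lemma act_strictMono (x : (ℝ ≃o ℝ) ⧸ N) : StrictMono (act N hN x) := by
  induction x using Quotient.inductionOn' with | _ f =>
  exact actG_strictMono f

end Stmt10Aux

open Stmt10Aux in
/-- Navas' theorem (Theorem 2.4 of the paper): the group `𝒢_∞` of germs at
`+∞`, i.e. the quotient of the group of order-preserving bijections of `ℝ`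
by the normal subgroup of those agreeing with the identity near `+∞`, is
left-orderable. -/
theorem stmt_10 (N : Subgroup (ℝ ≃o ℝ)) [N.Normal]
    (hN : (N : Set (ℝ ≃o ℝ)) = {f : ℝ ≃o ℝ | ∃ n : ℝ, ∀ x : ℝ, n ≤ x → f x = x}) :
    ∃ inst : LinearOrder ((ℝ ≃o ℝ) ⧸ N),
      ∀ x y z : (ℝ ≃o ℝ) ⧸ N, inst.lt x y → inst.lt (z * x) (z * y) := by
  classical
  set Q := (ℝ ≃o ℝ) ⧸ N
  set A : Q → SS → SS := act N hN with hA
  -- difference set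
  set D : Q → Q → Set SS := fun x y => {β | A x β ≠ A y β} with hD
  have wf : WellFounded (WellOrderingRel (α := SS)) := IsWellFounded.wf
  -- the strict order
  set slt : Q → Q → Prop := fun x y =>
    ∃ β, β ∈ D x y ∧ (∀ γ, WellOrderingRel γ β → γ ∉ D x y) ∧ A x β < A y β with hslt
  have D_symm : ∀ x y β, β ∈ D x y ↔ β ∈ D y x := fun x y β => ne_comm
  -- totality
  have total : ∀ x y : Q, x ≠ y → slt x y ∨ slt y x := by
    intro x y hxy
    have hne : (D x y).Nonempty := act_faithful N hN x y hxy
    set β₀ := wf.min (D x y) hne with hβ₀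
    have hmem : β₀ ∈ D x y := wf.min_mem _ hne
    have hmin : ∀ γ, WellOrderingRel γ β₀ → γ ∉ D x y := fun γ hγ hγm =>
      wf.not_lt_min _ hγm hγ
    rcases lt_or_gt_of_ne hmem with h | h
    · exact Or.inl ⟨β₀, hmem, hmin, h⟩
    · refine Or.inr ⟨β₀, (D_symm x y β₀).mp hmem, ?_, h⟩
      intro γ hγ hγm
      exact hmin γ hγ ((D_symm x y γ).mpr hγm)
  -- asymmetry
  have asymm : ∀ x y : Q, slt x y → ¬ slt y x := by
    rintro x y ⟨β, hβ, hβmin, hβlt⟩ ⟨β', hβ', hβ'min, hβ'lt⟩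
    have hββ' : β = β' := by
      rcases trichotomous_of WellOrderingRel β β' with h | h | h
      · exact absurd ((D_symm x y β).mp hβ) (hβ'min β h)
      · exact h
      · exact absurd ((D_symm y x β').mp hβ') (hβmin β' h)
    subst hββ'
    exact lt_asymm hβlt hβ'lt
  have irrefl : ∀ x : Q, ¬ slt x x := by
    rintro x ⟨β, hβ, -, -⟩
    exact hβ rfl
  -- transitivity
  have htrans : ∀ x y z : Q, slt x y → slt y z → slt x z := by
    rintro x y z ⟨β₁, hβ₁, hβ₁min, hβ₁lt⟩ ⟨β₂, hβ₂, hβ₂min, hβ₂lt⟩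
    rcases trichotomous_of WellOrderingRel β₁ β₂ with h | h | h
    · -- β₁ comes first : A y β₁ = A z β₁
      have heq : A y β₁ = A z β₁ := not_ne_iff.mp (hβ₂min β₁ h)
      refine ⟨β₁, ?_, ?_, ?_⟩
      · exact ne_of_lt (heq ▸ hβ₁lt)
      · intro γ hγ hγm
        have e1 : A x γ = A y γ := not_ne_iff.mp (hβ₁min γ hγ)
        have e2 : A y γ = A z γ := not_ne_iff.mp
          (hβ₂min γ (IsTrans.trans (r := WellOrderingRel) γ β₁ β₂ hγ h))
        exact hγm (e1.trans e2)
      · exact heq ▸ hβ₁lt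
    · subst h
      have hlt : A x β₁ < A z β₁ := lt_trans hβ₁lt hβ₂lt
      refine ⟨β₁, ne_of_lt hlt, ?_, hlt⟩
      intro γ hγ hγm
      have e1 : A x γ = A y γ := not_ne_iff.mp (hβ₁min γ hγ)
      have e2 : A y γ = A z γ := not_ne_iff.mp (hβ₂min γ hγ)
      exact hγm (e1.trans e2)
    · -- β₂ comes first : A x β₂ = A y β₂
      have heq : A x β₂ = A y β₂ := not_ne_iff.mp (hβ₁min β₂ h)
      refine ⟨β₂, ?_, ?_, ?_⟩
      · exact ne_of_lt (heq ▸ hβ₂lt)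
      · intro γ hγ hγm
        have e2 : A y γ = A z γ := not_ne_iff.mp (hβ₂min γ hγ)
        have e1 : A x γ = A y γ := not_ne_iff.mp
          (hβ₁min γ (IsTrans.trans (r := WellOrderingRel) γ β₂ β₁ hγ h))
        exact hγm (e1.trans e2)
      · exact heq ▸ hβ₂lt
  -- left invariance
  have linv : ∀ x y z : Q, slt x y → slt (z * x) (z * y) := by
    rintro x y z ⟨β, hβ, hβmin, hβlt⟩
    have hinj : Function.Injective (A z) := (act_strictMono N hN z).injective
    have hact : ∀ (w : Q) γ, A (z * w) γ = A z (A w γ) := fun w γ => act_mul N hN z w γ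
    have hDiff : ∀ γ, γ ∈ D (z * x) (z * y) ↔ γ ∈ D x y := by
      intro γ
      simp only [hD, Set.mem_setOf_eq, hact]
      exact hinj.ne_iff
    refine ⟨β, (hDiff β).mpr hβ, fun γ hγ hγm => hβmin γ hγ ((hDiff γ).mp hγm), ?_⟩
    rw [hact, hact]
    exact act_strictMono N hN z hβlt
  -- assemble the linear order
  refine ⟨{ lt := slt
            le := fun a b => slt a b ∨ a = b
            le_refl := fun a => Or.inr rfl
            le_trans := ?_
            le_antisymm := ?_
            le_total := ?_
            lt_iff_le_not_ge := ?_
            toDecidableLE := Classical.decRel _ }, ?_⟩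
  · rintro a b c (h | rfl) (h' | rfl)
    · exact Or.inl (htrans _ _ _ h h')
    · exact Or.inl h
    · exact Or.inl h'
    · exact Or.inr rfl
  · intro a b
    constructor
    · intro h
      refine ⟨Or.inl h, ?_⟩
      rintro (h' | rfl)
      · exact asymm _ _ h h'
      · exact irrefl _ h
    · rintro ⟨h | rfl, h2⟩
      · exact h
      · exact absurd (Or.inr rfl) h2
  · rintro a b (h | h) (h' | h')
    · exact absurd h' (asymm _ _ h)
    · exact h'.symm
    · exact h
    · exact h
  · intro a b
    by_cases h : a = b
    · exact Or.inl (Or.inr h)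
    · rcases total a b h with h' | h'
      · exact Or.inl (Or.inl h')
      · exact Or.inr (Or.inl h')
  · exact fun x y z h => linv x y z h
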